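/- For every graph G, diam(G) ≤ 2 if and only if d(v,e) ≤ 1 for every vertex v ∈ V(G) and every edge e ∈ E(G). -/
import Mathlib


open SimpleGraph Set

/-- Auxiliary distance on representations of points of the metric graph:
a point is represented by `(u, v, t)` with `u, v` adjacent and `t ∈ [0,1]`,
meaning the point on the edge `[u,v]` at distance `t` from `u`. -/
noncomputable def mgDistAux {V : Type} [Fintype V] [DecidableEq V] (G : SimpleGraph V)
    (p q : V × V × ℝ) : ℝ :=
  min
    (min (if p.1 = q.1 ∧ p.2.1 = q.2.1 then |p.2.2 - q.2.2| else (Fintype.card V : ℝ) + 1)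
         (if p.1 = q.2.1 ∧ p.2.1 = q.1 then |p.2.2 - (1 - q.2.2)| else (Fintype.card V : ℝ) + 1))
    (min (min (p.2.2 + (G.dist p.1 q.1 : ℝ) + q.2.2)
              (p.2.2 + (G.dist p.1 q.2.1 : ℝ) + (1 - q.2.2)))
         (min ((1 - p.2.2) + (G.dist p.2.1 q.1 : ℝ) + q.2.2)
              ((1 - p.2.2) + (G.dist p.2.1 q.2.1 : ℝ) + (1 - q.2.2))))

/-- The points of the metric graph associated to a simple graph `G`:
the vertices together with the interior points of the edges. -/
def MGPoint {V : Type} (G : SimpleGraph V) : Type :=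
  {p : V × V × ℝ // G.Adj p.1 p.2.1 ∧ p.2.2 ∈ Set.Icc (0 : ℝ) 1}

/-- The shortest-path distance on the metric graph associated to `G`
(every edge has length 1). -/
noncomputable def mgDist {V : Type} [Fintype V] [DecidableEq V] (G : SimpleGraph V)
    (p q : MGPoint G) : ℝ := mgDistAux G p.1 q.1

/-- Distance from a vertex `v` to a point of the metric graph. -/
noncomputable def mgVDist {V : Type} [Fintype V] [DecidableEq V] (G : SimpleGraph V)
    (v : V) (x : MGPoint G) : ℝ :=
  min ((G.dist v x.1.1 : ℝ) + x.1.2.2) ((G.dist v x.1.2.1 : ℝ) + (1 - x.1.2.2))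

/-- `γ` restricted to `[a,b]` is a geodesic in the metric graph of `G`
(an arc-length parametrization realizing distances). -/
def IsMGGeodesic {V : Type} [Fintype V] [DecidableEq V] (G : SimpleGraph V)
    (a b : ℝ) (γ : ℝ → MGPoint G) : Prop :=
  a ≤ b ∧ ∀ s ∈ Set.Icc a b, ∀ t ∈ Set.Icc a b, mgDist G (γ s) (γ t) = |s - t|

/-- A geodesic triangle in the metric graph of `G`: three geodesic sides whose
endpoints match cyclically (distance `0` means equality of points). -/
structure MGTriangle {V : Type} [Fintype V] [DecidableEq V] (G : SimpleGraph V) where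
  a1 : ℝ
  b1 : ℝ
  a2 : ℝ
  b2 : ℝ
  a3 : ℝ
  b3 : ℝ
  g1 : ℝ → MGPoint G
  g2 : ℝ → MGPoint G
  g3 : ℝ → MGPoint G
  h1 : IsMGGeodesic G a1 b1 g1
  h2 : IsMGGeodesic G a2 b2 g2
  h3 : IsMGGeodesic G a3 b3 g3
  glue1 : mgDist G (g1 b1) (g2 a2) = 0
  glue2 : mgDist G (g2 b2) (g3 a3) = 0
  glue3 : mgDist G (g3 b3) (g1 a1) = 0

/-- The sharp thin constant `δ(T)` of a geodesic triangle: the infimum of the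
`d ≥ 0` such that each side is contained in the `d`-neighborhood of the union of
the other two sides. -/
noncomputable def triangleDelta {V : Type} [Fintype V] [DecidableEq V] {G : SimpleGraph V}
    (T : MGTriangle G) : ℝ :=
  sInf {d : ℝ | 0 ≤ d ∧
    (∀ s ∈ Set.Icc T.a1 T.b1,
      (∃ t ∈ Set.Icc T.a2 T.b2, mgDist G (T.g1 s) (T.g2 t) ≤ d) ∨
      (∃ t ∈ Set.Icc T.a3 T.b3, mgDist G (T.g1 s) (T.g3 t) ≤ d)) ∧
    (∀ s ∈ Set.Icc T.a2 T.b2,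
      (∃ t ∈ Set.Icc T.a1 T.b1, mgDist G (T.g2 s) (T.g1 t) ≤ d) ∨
      (∃ t ∈ Set.Icc T.a3 T.b3, mgDist G (T.g2 s) (T.g3 t) ≤ d)) ∧
    (∀ s ∈ Set.Icc T.a3 T.b3,
      (∃ t ∈ Set.Icc T.a1 T.b1, mgDist G (T.g3 s) (T.g1 t) ≤ d) ∨
      (∃ t ∈ Set.Icc T.a2 T.b2, mgDist G (T.g3 s) (T.g2 t) ≤ d))}

/-- The hyperbolicity constant `δ(G)`: the supremum of `δ(T)` over all geodesic
triangles `T` in the metric graph of `G`. -/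
noncomputable def hypDelta {V : Type} [Fintype V] [DecidableEq V] (G : SimpleGraph V) : ℝ :=
  sSup {d : ℝ | ∃ T : MGTriangle G, d = triangleDelta T}

/-- The circumference of `G`: the length of a longest cycle. -/
noncomputable def circumference {V : Type} (G : SimpleGraph V) : ℕ :=
  sSup {n : ℕ | ∃ (a : V) (w : G.Walk a a), w.IsCycle ∧ w.length = n}

/-- `G` belongs to the class `𝒢(g,c,n)` of (connected) graphs with girth `g`,
circumference `c` and `n` vertices (vertex set `Fin n`). -/
def memGclass (g c : ℕ) {n : ℕ} (G : SimpleGraph (Fin n)) : Prop :=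
  G.Connected ∧ G.girth = g ∧ circumference G = c

/-- `A(g,c,n) = min {δ(G) : G ∈ 𝒢(g,c,n)}`. -/
noncomputable def Agcn (g c n : ℕ) : ℝ :=
  sInf {d : ℝ | ∃ G : SimpleGraph (Fin n), memGclass g c G ∧ d = hypDelta G}

/-- `B(g,c,n) = max {δ(G) : G ∈ 𝒢(g,c,n)}`. -/
noncomputable def Bgcn (g c n : ℕ) : ℝ :=
  sSup {d : ℝ | ∃ G : SimpleGraph (Fin n), memGclass g c G ∧ d = hypDelta G}

/-- `G` belongs to the class `ℋ(g,c,m)` of (connected) graphs with girth `g`,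
circumference `c` and `m` edges. -/
def memHclass (g c m : ℕ) {k : ℕ} (G : SimpleGraph (Fin k)) : Prop :=
  G.Connected ∧ G.girth = g ∧ circumference G = c ∧ G.edgeSet.ncard = m

/-- `α(g,c,m) = min {δ(G) : G ∈ ℋ(g,c,m)}`. -/
noncomputable def alphagcm (g c m : ℕ) : ℝ :=
  sInf {d : ℝ | ∃ (k : ℕ) (G : SimpleGraph (Fin k)), memHclass g c m G ∧ d = hypDelta G}

/-- `β(g,c,m) = max {δ(G) : G ∈ ℋ(g,c,m)}`. -/
noncomputable def betagcm (g c m : ℕ) : ℝ :=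
  sSup {d : ℝ | ∃ (k : ℕ) (G : SimpleGraph (Fin k)), memHclass g c m G ∧ d = hypDelta G}

lemma min4_aux {T1 T2 T3 T4 : ℝ} (h : T1 + T4 ≤ 4 ∨ T2 + T3 ≤ 4) :
    min (min T1 T2) (min T3 T4) ≤ 2 := by
  rcases h with h | h
  · have a1 : min (min T1 T2) (min T3 T4) ≤ T1 := le_trans (min_le_left _ _) (min_le_left _ _)
    have a2 : min (min T1 T2) (min T3 T4) ≤ T4 := le_trans (min_le_right _ _) (min_le_right _ _)
    linarith
  · have a1 : min (min T1 T2) (min T3 T4) ≤ T2 := le_trans (min_le_left _ _) (min_le_right _ _)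
    have a2 : min (min T1 T2) (min T3 T4) ≤ T3 := le_trans (min_le_right _ _) (min_le_left _ _)
    linarith

/-- Lemma (Z): For every graph `G`, `diam(G) ≤ 2` if and only if `d(v,e) ≤ 1`
for every vertex `v` and every edge `e`. The diameter is taken over all points
of the metric graph, and `d(v,e)` is the distance from `v` to the set of points
of the edge `e`. -/
theorem diam_le_two_iff {V : Type} [Fintype V] [DecidableEq V] (G : SimpleGraph V)
    (hG : G.Connected) :
    (∀ x y : MGPoint G, mgDist G x y ≤ 2) ↔
    (∀ v : V, ∀ e ∈ G.edgeSet,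
      sInf {d : ℝ | ∃ x : MGPoint G, s(x.1.1, x.1.2.1) = e ∧ d = mgVDist G v x} ≤ 1) := by
  constructor
  · intro h v e he
    induction e using Sym2.ind with
    | _ a b =>
    have hab : G.Adj a b := G.mem_edgeSet.mp he
    have hBdd : BddBelow {d : ℝ | ∃ x : MGPoint G,
        s(x.1.1, x.1.2.1) = s(a, b) ∧ d = mgVDist G v x} := by
      refine ⟨0, fun r hr => ?_⟩
      obtain ⟨x, -, rfl⟩ := hr
      obtain ⟨h0, h1⟩ := x.2.2
      refine le_min (add_nonneg (Nat.cast_nonneg _) h0)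
        (add_nonneg (Nat.cast_nonneg _) (by linarith))
    -- key claim
    have claim : G.dist v a ≤ 1 ∨ G.dist v b ≤ 1 := by
      by_cases hva : v = a
      · left; subst hva; simp [SimpleGraph.dist_self]
      · obtain ⟨w, hvw⟩ : ∃ w, G.Adj v w := by
          obtain ⟨p⟩ := hG.preconnected v a
          cases p with
          | nil => exact absurd rfl hva
          | cons hvw q => exact ⟨_, hvw⟩
        have H := h ⟨(v, w, 0), hvw, by norm_num⟩ ⟨(a, b, 1/2), hab, by norm_num⟩
        have hcard : (2 : ℝ) ≤ (Fintype.card V : ℝ) := by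
          have : 2 ≤ Fintype.card V := Fintype.one_lt_card_iff_nontrivial.mpr ⟨⟨a, b, hab.ne⟩⟩
          exact_mod_cast this
        simp only [mgDist, mgDistAux] at H
        split_ifs at H with h1 h2 h2
        all_goals simp only [min_le_iff] at H
        · left
          obtain ⟨rfl, rfl⟩ := h1
          simp [SimpleGraph.dist_self]
        · left
          obtain ⟨rfl, rfl⟩ := h1
          simp [SimpleGraph.dist_self]
        · right
          obtain ⟨rfl, rfl⟩ := h2
          simp [SimpleGraph.dist_self]
        · rcases H with ((H | H) | ((H | H) | (H | H)))
          · linarith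
          · linarith
          · left
            have : G.dist v a < 2 := by exact_mod_cast show (G.dist v a : ℝ) < 2 by linarith
            omega
          · right
            have : G.dist v b < 2 := by exact_mod_cast show (G.dist v b : ℝ) < 2 by linarith
            omega
          · left
            have hwa : G.dist w a = 0 := by
              have : G.dist w a < 1 := by exact_mod_cast show (G.dist w a : ℝ) < 1 by linarith
              omega
            have : w = a := ((hG.preconnected w a).dist_eq_zero_iff).mp hwa
            subst this
            exact le_of_eq (SimpleGraph.dist_eq_one_iff_adj.mpr hvw)
          · right
            have hwb : G.dist w b = 0 := by
              have : G.dist w b < 1 := by exact_mod_cast show (G.dist w b : ℝ) < 1 by linarith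
              omega
            have : w = b := ((hG.preconnected w b).dist_eq_zero_iff).mp hwb
            subst this
            exact le_of_eq (SimpleGraph.dist_eq_one_iff_adj.mpr hvw)
    rcases claim with hle | hle
    · have hmem : mgVDist G v ⟨(a, b, 0), hab, by norm_num⟩ ∈ {d : ℝ | ∃ x : MGPoint G,
          s(x.1.1, x.1.2.1) = s(a, b) ∧ d = mgVDist G v x} := ⟨_, rfl, rfl⟩
      refine le_trans (csInf_le hBdd hmem) ?_
      have hc : (G.dist v a : ℝ) ≤ 1 := by exact_mod_cast hle
      refine le_trans (min_le_left _ _) ?_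
      simpa using hc
    · have hmem : mgVDist G v ⟨(a, b, 1), hab, by norm_num⟩ ∈ {d : ℝ | ∃ x : MGPoint G,
          s(x.1.1, x.1.2.1) = s(a, b) ∧ d = mgVDist G v x} := ⟨_, rfl, rfl⟩
      refine le_trans (csInf_le hBdd hmem) ?_
      have hc : (G.dist v b : ℝ) ≤ 1 := by exact_mod_cast hle
      refine le_trans (min_le_right _ _) ?_
      simpa using hc
  · intro h
    have key : ∀ v c d : V, G.Adj c d → G.dist v c ≤ 1 ∨ G.dist v d ≤ 1 := by
      intro v c d hcd
      by_contra hcon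
      push_neg at hcon
      obtain ⟨hc, hd⟩ := hcon
      have hcN : (2 : ℝ) ≤ (G.dist v c : ℝ) := by exact_mod_cast hc
      have hdN : (2 : ℝ) ≤ (G.dist v d : ℝ) := by exact_mod_cast hd
      have hS := h v s(c, d) (G.mem_edgeSet.mpr hcd)
      have hne : ({r : ℝ | ∃ x : MGPoint G, s(x.1.1, x.1.2.1) = s(c, d) ∧
          r = mgVDist G v x}).Nonempty :=
        ⟨_, ⟨(⟨(c, d, 0), hcd, by norm_num⟩ : MGPoint G), rfl, rfl⟩⟩
      have hlb : (2 : ℝ) ≤ sInf {r : ℝ | ∃ x : MGPoint G, s(x.1.1, x.1.2.1) = s(c, d) ∧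
          r = mgVDist G v x} := by
        refine le_csInf hne ?_
        rintro r ⟨x, hx, rfl⟩
        obtain ⟨h0, h1⟩ := x.2.2
        rw [Sym2.eq_iff] at hx
        unfold mgVDist
        rcases hx with ⟨e1, e2⟩ | ⟨e1, e2⟩ <;> rw [e1, e2] <;>
          exact le_min (by linarith) (by linarith)
      linarith
    intro x y
    obtain ⟨⟨a, b, s⟩, hab, hs0, hs1⟩ := x
    obtain ⟨⟨c, d, t⟩, hcd, ht0, ht1⟩ := y
    refine le_trans (min_le_right _ _) (min4_aux ?_)
    simp only
    have hdisj : (G.dist a c ≤ 1 ∧ G.dist b d ≤ 1) ∨ (G.dist a d ≤ 1 ∧ G.dist b c ≤ 1) := by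
      by_cases h1 : G.dist a c ≤ 1
      · by_cases h4 : G.dist b d ≤ 1
        · exact Or.inl ⟨h1, h4⟩
        · right
          constructor
          · rcases key d a b hab with hx | hx
            · rwa [SimpleGraph.dist_comm] at hx
            · rw [SimpleGraph.dist_comm] at hx; omega
          · rcases key b c d hcd with hx | hx
            · exact hx
            · omega
      · right
        constructor
        · rcases key a c d hcd with hx | hx
          · omega
          · exact hx
        · rcases key c a b hab with hx | hx
          · rw [SimpleGraph.dist_comm] at hx; omega
          · rwa [SimpleGraph.dist_comm] at hx
    rcases hdisj with ⟨hx, hy⟩ | ⟨hx, hy⟩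
    · left
      have hx' : (G.dist a c : ℝ) ≤ 1 := by exact_mod_cast hx
      have hy' : (G.dist b d : ℝ) ≤ 1 := by exact_mod_cast hy
      linarith
    · right
      have hx' : (G.dist a d : ℝ) ≤ 1 := by exact_mod_cast hx
      have hy' : (G.dist b c : ℝ) ≤ 1 := by exact_mod_cast hy
      linarith
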